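/- Strong completeness of the logic of clandestine operations: if X ⊬ φ, then there exists a state w of some clandestine game such that w ⊨ χ for every χ ∈ X and w ⊭ φ. -/

import Mathlib

/-- Formulas of the logic of clandestine operations: propositional variables,
falsum, negation, implication, distributed knowledge `know C φ` and
clandestine power `how C φ` for coalitions `C ⊆ Ag`. -/
inductive Formula (α : Type) (Ag : Type) : Type
  | var  : α → Formula α Ag
  | bot  : Formula α Ag
  | neg  : Formula α Ag → Formula α Ag
  | imp  : Formula α Ag → Formula α Ag → Formula α Ag
  | know : Set Ag → Formula α Ag → Formula α Ag
  | how  : Set Ag → Formula α Ag → Formula α Ag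

namespace Formula

/-- Defined disjunction. -/
def or {α Ag : Type} (φ ψ : Formula α Ag) : Formula α Ag := imp (neg φ) ψ

/-- Defined verum. -/
def top {α Ag : Type} : Formula α Ag := neg bot

/-- Boolean evaluation treating variables and modal formulas as atoms. -/
def eval {α Ag : Type} (v : Formula α Ag → Bool) : Formula α Ag → Bool
  | var p => v (var p)
  | bot => false
  | neg φ => !(eval v φ)
  | imp φ ψ => !(eval v φ) || eval v ψ
  | know C φ => v (know C φ)
  | how C φ => v (how C φ)

end Formula

/-- A propositional tautology: true under every Boolean valuation of its
atoms (variables and modal subformulas). -/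
def Tautology {α Ag : Type} (φ : Formula α Ag) : Prop :=
  ∀ v, φ.eval v = true

/-- Theorems of the logic of clandestine operations. -/
inductive Prov {α Ag : Type} : Formula α Ag → Prop
  | taut {φ} : Tautology φ → Prov φ
  | truth (C : Set Ag) (φ) : Prov (.imp (.know C φ) φ)
  | negIntro (C : Set Ag) (φ) :
      Prov (.imp (.neg (.know C φ)) (.know C (.neg (.know C φ))))
  | distrib (C : Set Ag) (φ ψ) :
      Prov (.imp (.know C (.imp φ ψ)) (.imp (.know C φ) (.know C ψ)))
  | mono {C' C : Set Ag} (φ) : C' ⊆ C → Prov (.imp (.know C' φ) (.know C φ))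
  | stratIntro (C : Set Ag) (φ) : Prov (.imp (.how C φ) (.know C (.how C φ)))
  | cia {C I A : Set Ag} (φ ψ) : C ∩ (I ∪ A) = ∅ →
      Prov (.imp
        (.know (C ∪ I) (.know (A ∪ I) (.imp (.know C φ) (.know (C ∪ I) ψ))))
        (.imp (.how C φ) (.how (C ∪ I) ψ)))
  | nonterm (C : Set Ag) : Prov (.neg (.how C .bot))
  | emptyCoal (φ : Formula α Ag) : Prov (.neg (.how ∅ φ))
  | mp {φ ψ} : Prov (.imp φ ψ) → Prov φ → Prov ψ
  | necK (C : Set Ag) {φ} : Prov φ → Prov (.know C φ)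
  | necH {C : Set Ag} {φ} : C ≠ ∅ → Prov φ → Prov (.how C φ)

/-- Derivability from a set of hypotheses `X`: from theorems of the system
and members of `X` using Modus Ponens only. -/
inductive ProvFrom {α Ag : Type} (X : Set (Formula α Ag)) : Formula α Ag → Prop
  | hyp {φ} : φ ∈ X → ProvFrom X φ
  | thm {φ} : Prov φ → ProvFrom X φ
  | mp {φ ψ} : ProvFrom X (.imp φ ψ) → ProvFrom X φ → ProvFrom X ψ

/-- A set of formulas is consistent if falsum is not derivable from it. -/
def Consistent {α Ag : Type} (X : Set (Formula α Ag)) : Prop :=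
  ¬ ProvFrom X .bot

/-- Maximal consistent set of formulas. -/
def MCS {α Ag : Type} (X : Set (Formula α Ag)) : Prop :=
  Consistent X ∧ ∀ φ : Formula α Ag, φ ∈ X ∨ .neg φ ∈ X

/-- A clandestine game. -/
structure Game (α Ag : Type) where
  W : Type
  sim : Ag → W → W → Prop
  sim_equiv : ∀ a, Equivalence (sim a)
  Δ : Type
  Δ_nonempty : Nonempty Δ
  M : W → Set Ag → Δ → W → Prop
  concealment : ∀ w C δ u, M w C δ u → ∀ a ∉ C, sim a w u
  nonterm : ∀ w C δ, ∃ u, M w C δ u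
  π : α → Set W

/-- Coalition indistinguishability: `w ∼_C u` iff `w ∼_a u` for all `a ∈ C`. -/
def Game.simC {α Ag : Type} (G : Game α Ag) (C : Set Ag) (w u : G.W) : Prop :=
  ∀ a ∈ C, G.sim a w u

/-- Satisfaction relation for clandestine games. -/
def Game.Sat {α Ag : Type} (G : Game α Ag) : G.W → Formula α Ag → Prop
  | w, .var p => w ∈ G.π p
  | _, .bot => False
  | w, .neg φ => ¬ G.Sat w φ
  | w, .imp φ ψ => G.Sat w φ → G.Sat w ψ
  | w, .know C φ => ∀ u, G.simC C w u → G.Sat u φ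
  | w, .how C φ => ∃ C', C' ⊆ C ∧ C'.Nonempty ∧ ∃ δ : G.Δ,
      ∀ w' u u', G.simC C w w' → G.M w' C' δ u → G.simC C u u' → G.Sat u' φ

/-!
Canonical model. The worlds are the histories of a tree rooted at a maximal consistent
extension of `X ∪ {¬φ}`: each step carries a coalition label `D` and moves from a maximal
consistent set `Y` to a maximal consistent `Z` containing everything `D` knows in `Y`. An
agent `a` confuses two histories that agree once their latest steps with `a` in the label
are stripped off; by introspection, `K_C`-formulas survive steps whose label contains `C`,
which gives the knowledge case of the truth lemma. Running the mechanism `(C', δ)` is a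
step labelled `C'ᶜ`, so that only `C'` notices it, and it must establish `K_{C'} δ`
wherever `H_{C'} δ` holds; the Coalition-Informant-Adversary axiom together with
Nontermination makes such a step available. For the `H`-case, the same axiom with
informants `C \ C'` and adversaries `Cᶜ` produces, from `¬H_C φ`, a history on which every
attempt of a nonempty `C' ⊆ C` ends in `¬K_C φ`.
-/

open Formula

variable {α Ag : Type}

namespace List

theorem dropWhile_suffix_dropWhile_of_imp {β : Type*} {p q : β → Bool}
    (hpq : ∀ b, p b → q b) (l : List β) : l.dropWhile q <:+ l.dropWhile p := by
  induction l with
  | nil => exact suffix_refl _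
  | cons b l ih =>
    by_cases hp : p b
    · rw [dropWhile_cons_of_pos hp, dropWhile_cons_of_pos (hpq b hp)]
      exact ih
    · rw [dropWhile_cons_of_neg hp]
      exact dropWhile_suffix q

theorem dropWhile_eq_cons_of_imp {β : Type*} {p q : β → Bool} (hpq : ∀ b, p b → q b)
    {l l' : List β} {b : β} (hl : l.dropWhile p = b :: l') (hb : q b = false) :
    l.dropWhile q = b :: l' := by
  induction l with
  | nil => simp at hl
  | cons c l ih =>
    by_cases hp : p c
    · rw [dropWhile_cons_of_pos hp] at hl
      rw [dropWhile_cons_of_pos (hpq c hp), ih hl]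
    · rw [dropWhile_cons_of_neg hp] at hl
      obtain ⟨rfl, rfl⟩ := cons.inj hl
      rw [dropWhile_cons_of_neg (by simp [hb])]

end List

namespace Prov

theorem imp_trans {φ ψ χ : Formula α Ag} (h₁ : Prov (imp φ ψ)) (h₂ : Prov (imp ψ χ)) :
    Prov (imp φ χ) :=
  mp (mp (taut fun v => by grind [eval]) h₁) h₂

theorem know_imp_know (C : Set Ag) {φ ψ : Formula α Ag} (h : Prov (imp φ ψ)) :
    Prov (imp (know C φ) (know C ψ)) :=
  mp (distrib C φ ψ) (necK C h)

theorem know_imp_know_know (C : Set Ag) (φ : Formula α Ag) :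
    Prov (imp (know C φ) (know C (know C φ))) := by
  have h₁ : Prov (imp (know C φ) (neg (know C (neg (know C φ))))) :=
    mp (taut fun v => by grind [eval]) (truth C (neg (know C φ)))
  have h₂ : Prov (imp (neg (know C (neg (know C φ)))) (know C φ)) :=
    mp (taut fun v => by grind [eval]) (negIntro C φ)
  exact imp_trans h₁ (imp_trans (negIntro C _) (know_imp_know C h₂))

theorem cia_of_subset {C' C : Set Ag} (hC : C' ⊆ C) (δ φ : Formula α Ag) :
    Prov (imp (know C (know C'ᶜ (imp (know C' δ) (know C φ))))
      (imp (how C' δ) (how C φ))) := by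
  have hA : Cᶜ ∪ C \ C' = C'ᶜ := by
    ext a
    have := @hC a
    simp only [Set.mem_union, Set.mem_compl_iff, Set.mem_sdiff]
    tauto
  have hcia := cia (C := C') (I := C \ C') (A := Cᶜ) δ φ (by
    ext a
    have := @hC a
    simp only [Set.mem_inter_iff, Set.mem_union, Set.mem_sdiff, Set.mem_compl_iff,
      Set.mem_empty_iff_false, iff_false]
    tauto)
  rwa [Set.union_sdiff_cancel hC, hA] at hcia

/-- Otherwise CIA, with informants `C'ᶜ` and no adversaries, would make `⊥` achievable. -/
theorem how_imp_not_know_compl_not_know (C' : Set Ag) (δ : Formula α Ag) :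
    Prov (imp (how C' δ) (neg (know C'ᶜ (neg (know C' δ))))) := by
  set E := C' ∪ C'ᶜ
  have hcia := cia (C := C') (I := C'ᶜ) (A := ∅) δ bot (by simp)
  rw [Set.empty_union] at hcia
  have hweaken : Prov (imp (neg (know C' δ)) (imp (know C' δ) (know E bot))) :=
    taut fun v => by grind [eval]
  have hchain : Prov (imp (know C'ᶜ (neg (know C' δ))) (imp (how C' δ) (how E bot))) :=
    imp_trans (know_imp_know _ hweaken) <| imp_trans (know_imp_know_know _ _) <|
      imp_trans (mono _ Set.subset_union_right) hcia
  exact mp (mp (taut fun v => by grind [eval]) hchain) (nonterm E)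

end Prov

namespace ProvFrom

variable {X Y : Set (Formula α Ag)} {φ ψ : Formula α Ag}

theorem mono (hXY : X ⊆ Y) (h : ProvFrom X φ) : ProvFrom Y φ := by
  induction h with
  | hyp h => exact hyp (hXY h)
  | thm h => exact thm h
  | mp _ _ ih₁ ih₂ => exact mp ih₁ ih₂

theorem of_prov_imp (h : Prov (imp φ ψ)) (hφ : ProvFrom X φ) : ProvFrom X ψ :=
  mp (thm h) hφ

theorem deduction (h : ProvFrom (insert ψ X) φ) : ProvFrom X (imp ψ φ) := by
  induction h with
  | hyp h =>
    rcases Set.mem_insert_iff.mp h with rfl | h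
    · exact thm (Prov.taut fun v => by grind [eval])
    · exact of_prov_imp (Prov.taut fun v => by grind [eval]) (hyp h)
  | thm h => exact of_prov_imp (Prov.taut fun v => by grind [eval]) (thm h)
  | mp _ _ ih₁ ih₂ => exact mp (of_prov_imp (Prov.taut fun v => by grind [eval]) ih₁) ih₂

theorem exists_mem_of_sUnion {c : Set (Set (Formula α Ag))} (hc : IsChain (· ⊆ ·) c)
    (hne : c.Nonempty) (h : ProvFrom (⋃₀ c) φ) : ∃ X ∈ c, ProvFrom X φ := by
  induction h with
  | hyp h =>
    obtain ⟨X, hX, hφ⟩ := Set.mem_sUnion.mp h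
    exact ⟨X, hX, hyp hφ⟩
  | thm h => exact ⟨hne.some, hne.some_mem, thm h⟩
  | mp _ _ ih₁ ih₂ =>
    obtain ⟨X₁, hX₁, h₁⟩ := ih₁
    obtain ⟨X₂, hX₂, h₂⟩ := ih₂
    rcases hc.total hX₁ hX₂ with h12 | h21
    · exact ⟨X₂, hX₂, mp (h₁.mono h12) h₂⟩
    · exact ⟨X₁, hX₁, mp h₁ (h₂.mono h21)⟩

end ProvFrom

section Lindenbaum

variable {X : Set (Formula α Ag)} {φ : Formula α Ag}

theorem consistent_insert_neg (h : ¬ ProvFrom X φ) : Consistent (insert (neg φ) X) :=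
  fun hbot => h (.of_prov_imp (Prov.taut fun v => by grind [eval]) hbot.deduction)

theorem Consistent.insert_of_provFrom (hX : Consistent X) (hφ : ProvFrom X φ) :
    Consistent (insert φ X) :=
  fun hbot => hX (.mp hbot.deduction hφ)

theorem Consistent.exists_mcs_superset (hX : Consistent X) : ∃ Y, X ⊆ Y ∧ MCS Y := by
  obtain ⟨Y, hXY, hY⟩ := zorn_subset_nonempty {Y : Set (Formula α Ag) | Consistent Y}
    (fun c hc hchain hne => ⟨⋃₀ c, fun hbot => by
      obtain ⟨Z, hZ, hZbot⟩ := ProvFrom.exists_mem_of_sUnion hchain hne hbot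
      exact hc hZ hZbot, fun _ => Set.subset_sUnion_of_mem⟩) X hX
  refine ⟨Y, hXY, hY.prop, fun φ => ?_⟩
  by_cases hneg : Consistent (insert (neg φ) Y)
  · exact .inr (hY.eq_of_ge hneg (Set.subset_insert _ _) ▸ Set.mem_insert _ _)
  · have hφ : ProvFrom Y φ := not_not.mp (mt consistent_insert_neg hneg)
    exact .inl (hY.eq_of_ge (hY.prop.insert_of_provFrom hφ) (Set.subset_insert _ _) ▸
      Set.mem_insert _ _)

end Lindenbaum

def knowSet (D : Set Ag) (Y : Set (Formula α Ag)) : Set (Formula α Ag) :=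
  {χ | know D χ ∈ Y}

namespace MCS

variable {X Y Z : Set (Formula α Ag)} {φ ψ : Formula α Ag}

theorem mem_of_provFrom (hY : MCS Y) (h : ProvFrom Y φ) : φ ∈ Y :=
  (hY.2 φ).resolve_right fun hneg =>
    hY.1 (.mp (.of_prov_imp (Prov.taut fun v => by grind [eval]) h) (.hyp hneg))

theorem mem_of_prov (hY : MCS Y) (h : Prov φ) : φ ∈ Y :=
  hY.mem_of_provFrom (.thm h)

theorem mem_of_prov_imp (hY : MCS Y) (h : Prov (imp φ ψ)) (hφ : φ ∈ Y) : ψ ∈ Y :=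
  hY.mem_of_provFrom (.of_prov_imp h (.hyp hφ))

theorem bot_not_mem (hY : MCS Y) : bot ∉ Y :=
  fun h => hY.1 (.hyp h)

theorem neg_mem_iff (hY : MCS Y) : neg φ ∈ Y ↔ φ ∉ Y :=
  ⟨fun hneg hφ => hY.1 (.mp (.of_prov_imp (Prov.taut fun v => by grind [eval]) (.hyp hφ))
    (.hyp hneg)), (hY.2 φ).resolve_left⟩

theorem imp_mem_iff (hY : MCS Y) : imp φ ψ ∈ Y ↔ (φ ∈ Y → ψ ∈ Y) := by
  refine ⟨fun h hφ => hY.mem_of_provFrom (.mp (.hyp h) (.hyp hφ)), fun h => ?_⟩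
  by_cases hφ : φ ∈ Y
  · exact hY.mem_of_prov_imp (Prov.taut fun v => by grind [eval]) (h hφ)
  · exact hY.mem_of_prov_imp (Prov.taut fun v => by grind [eval]) (hY.neg_mem_iff.mpr hφ)

theorem know_mem_of_provFrom_knowSet {D : Set Ag} (hY : MCS Y)
    (h : ProvFrom (knowSet D Y) φ) : know D φ ∈ Y := by
  induction h with
  | hyp h => exact h
  | thm h => exact hY.mem_of_prov (.necK D h)
  | mp _ _ ih₁ ih₂ => exact hY.imp_mem_iff.mp (hY.mem_of_prov_imp (.distrib D _ _) ih₁) ih₂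

theorem exists_knowSet_subset_not_mem {D : Set Ag} (hY : MCS Y) (h : know D φ ∉ Y) :
    ∃ Z, MCS Z ∧ knowSet D Y ⊆ Z ∧ φ ∉ Z := by
  obtain ⟨Z, hsub, hZ⟩ := (consistent_insert_neg fun hφ =>
    h (hY.know_mem_of_provFrom_knowSet hφ)).exists_mcs_superset
  exact ⟨Z, hZ, (Set.subset_insert _ _).trans hsub,
    hZ.neg_mem_iff.mp (hsub (Set.mem_insert _ _))⟩

theorem know_mem_iff_of_knowSet_subset {C D : Set Ag} (hY : MCS Y) (hZ : MCS Z)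
    (hYZ : knowSet D Y ⊆ Z) (hCD : C ⊆ D) (χ : Formula α Ag) :
    know C χ ∈ Z ↔ know C χ ∈ Y := by
  refine ⟨fun hZχ => by_contra fun hYχ => ?_, fun hYχ => hYZ ?_⟩
  · refine hZ.neg_mem_iff.mp (hYZ ?_) hZχ
    exact hY.mem_of_prov_imp (Prov.imp_trans (.negIntro C χ) (.mono _ hCD))
      (hY.neg_mem_iff.mpr hYχ)
  · exact hY.mem_of_prov_imp (Prov.imp_trans (Prov.know_imp_know_know C χ) (.mono _ hCD)) hYχ

theorem exists_knowSet_compl_subset_how_imp_know (hX : MCS X) (C' : Set Ag)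
    (δ : Formula α Ag) :
    ∃ Z, MCS Z ∧ knowSet C'ᶜ X ⊆ Z ∧ (how C' δ ∈ X → know C' δ ∈ Z) := by
  by_cases hH : how C' δ ∈ X
  · have hK : know C'ᶜ (neg (know C' δ)) ∉ X :=
      hX.neg_mem_iff.mp (hX.mem_of_prov_imp (Prov.how_imp_not_know_compl_not_know C' δ) hH)
    obtain ⟨Z, hZ, hXZ, hδ⟩ := hX.exists_knowSet_subset_not_mem hK
    exact ⟨Z, hZ, hXZ, fun _ => not_not.mp (mt hZ.neg_mem_iff.mpr hδ)⟩
  · obtain ⟨Z, hZ, hXZ, -⟩ := hX.exists_knowSet_subset_not_mem (φ := bot) (D := C'ᶜ)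
      fun h => hX.bot_not_mem (hX.mem_of_prov_imp (.truth _ _) h)
    exact ⟨Z, hZ, hXZ, fun h => absurd h hH⟩

theorem exists_chain_of_how_mem {C C' : Set Ag} {ε : Formula α Ag} (hX : MCS X)
    (hφ : how C φ ∉ X) (hC : C' ⊆ C) (hε : how C' ε ∈ X) :
    ∃ Y Z, MCS Y ∧ knowSet C X ⊆ Y ∧ MCS Z ∧ knowSet C'ᶜ Y ⊆ Z ∧
      know C' ε ∈ Z ∧ know C φ ∉ Z := by
  have hX₁ : know C (know C'ᶜ (imp (know C' ε) (know C φ))) ∉ X := fun h =>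
    hφ (hX.imp_mem_iff.mp (hX.mem_of_prov_imp (Prov.cia_of_subset hC ε φ) h) hε)
  obtain ⟨Y, hY, hXY, hY₁⟩ := hX.exists_knowSet_subset_not_mem hX₁
  obtain ⟨Z, hZ, hYZ, hZ₁⟩ := hY.exists_knowSet_subset_not_mem hY₁
  rw [hZ.imp_mem_iff, Classical.not_imp] at hZ₁
  exact ⟨Y, Z, hY, hXY, hZ, hYZ, hZ₁⟩

theorem exists_chain_of_how_not_mem {C C' : Set Ag} (hX : MCS X) (hφ : how C φ ∉ X)
    (hC : C' ⊆ C) (hC' : C'.Nonempty) (δ : Formula α Ag) :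
    ∃ Y Z, MCS Y ∧ knowSet C X ⊆ Y ∧ MCS Z ∧ knowSet C'ᶜ Y ⊆ Z ∧
      (how C' δ ∈ Y → know C' δ ∈ Z) ∧ know C φ ∉ Z := by
  by_cases hδ : how C' δ ∈ X
  · obtain ⟨Y, Z, hY, hXY, hZ, hYZ, hδZ, hφZ⟩ := hX.exists_chain_of_how_mem hφ hC hδ
    exact ⟨Y, Z, hY, hXY, hZ, hYZ, fun _ => hδZ, hφZ⟩
  -- `H_{C'} δ` then fails after the `C`-step too, so any chain will do; the trivially
  -- achievable goal `⊤` provides one.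
  · have htop : how C' top ∈ X := hX.mem_of_prov (.necH hC'.ne_empty (.taut fun _ => rfl))
    obtain ⟨Y, Z, hY, hXY, hZ, hYZ, -, hφZ⟩ := hX.exists_chain_of_how_mem hφ hC htop
    refine ⟨Y, Z, hY, hXY, hZ, hYZ, fun hδY => absurd ?_ hδ, hφZ⟩
    have hKδY : know C (how C' δ) ∈ Y :=
      hY.mem_of_prov_imp (Prov.imp_trans (.stratIntro C' δ) (.mono _ hC)) hδY
    exact hX.mem_of_prov_imp (.truth C _)
      ((hX.know_mem_iff_of_knowSet_subset hY hXY subset_rfl _).mp hKδY)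

end MCS

namespace Canonical

/-- The histories of the canonical tree, latest step first; a step `(D, Z)` is an edge
labelled `D` into a node carrying the theory `Z`. -/
abbrev History (α Ag : Type) := List (Set Ag × Set (Formula α Ag))

open Classical

noncomputable def base (C : Set Ag) (l : History α Ag) : History α Ag :=
  l.dropWhile fun e => C ⊆ e.1

theorem base_cons_of_subset {C : Set Ag} {e : Set Ag × Set (Formula α Ag)} (h : C ⊆ e.1)
    (l : History α Ag) : base C (e :: l) = base C l :=
  List.dropWhile_cons_of_pos (decide_eq_true h)

theorem base_suffix_base_of_subset {C D : Set Ag} (hDC : D ⊆ C) (l : History α Ag) :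
    base D l <:+ base C l :=
  List.dropWhile_suffix_dropWhile_of_imp (fun e h => by
    simp only [decide_eq_true_eq] at h ⊢
    exact hDC.trans h) l

theorem base_eq_of_forall_singleton {C : Set Ag} {w u : History α Ag}
    (h : ∀ a ∈ C, base {a} w = base {a} u) : base C w = base C u := by
  suffices key : ∀ w u : History α Ag, (∀ a ∈ C, base {a} w = base {a} u) →
      base C w <:+ base C u from
    (key w u h).eq_of_length_le (key u w fun a ha => (h a ha).symm).length_le
  intro w u h
  cases hw : base C w with
  | nil => exact List.nil_suffix
  | cons e l =>
    have he := List.head?_dropWhile_not (fun e => decide (C ⊆ e.1)) w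
    rw [← base, hw] at he
    obtain ⟨a, ha, hae⟩ := Set.not_subset.mp (of_decide_eq_false he)
    have hwa : base {a} w = e :: l :=
      List.dropWhile_eq_cons_of_imp (fun e h => by
        simp only [decide_eq_true_eq, Set.singleton_subset_iff] at h ⊢
        exact h ha) hw (by simpa using hae)
    rw [← hwa, h a ha]
    exact base_suffix_base_of_subset (Set.singleton_subset_iff.mpr ha) u

variable {R : Set (Formula α Ag)}

variable (R) in
def theory : History α Ag → Set (Formula α Ag)
  | [] => R
  | e :: _ => e.2

variable (R) in
def IsHistory : History α Ag → Prop
  | [] => True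
  | e :: l => IsHistory l ∧ MCS e.2 ∧ knowSet e.1 (theory R l) ⊆ e.2

theorem mcs_theory (hR : MCS R) : ∀ {l : History α Ag}, IsHistory R l → MCS (theory R l)
  | [], _ => hR
  | _ :: _, h => h.2.1

theorem know_mem_theory_base_iff (hR : MCS R) {l : History α Ag} (hl : IsHistory R l)
    (C : Set Ag) (χ : Formula α Ag) :
    know C χ ∈ theory R (base C l) ↔ know C χ ∈ theory R l := by
  induction l with
  | nil => rfl
  | cons e l ih =>
    by_cases hC : C ⊆ e.1
    · rw [base_cons_of_subset hC, ih hl.1]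
      exact (MCS.know_mem_iff_of_knowSet_subset (mcs_theory hR hl.1) hl.2.1 hl.2.2 hC χ).symm
    · rw [base, List.dropWhile_cons_of_neg (by simpa using hC)]

/-- An action is a formula: the goal pursued by the coalition running the mechanism. -/
noncomputable def game (hR : MCS R) : Game α Ag where
  W := {l : History α Ag // IsHistory R l}
  sim a w u := base {a} w.1 = base {a} u.1
  sim_equiv _ := ⟨fun _ => rfl, Eq.symm, Eq.trans⟩
  Δ := Formula α Ag
  Δ_nonempty := ⟨bot⟩
  M w C' δ u := (∃ Z, u.1 = (C'ᶜ, Z) :: w.1) ∧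
    (how C' δ ∈ theory R w.1 → know C' δ ∈ theory R u.1)
  concealment := by
    rintro w C' δ u ⟨⟨Z, hu⟩, -⟩ a ha
    rw [hu, base_cons_of_subset (Set.singleton_subset_iff.mpr ha)]
  nonterm w C' δ := by
    obtain ⟨Z, hZ, hsub, hδ⟩ :=
      (mcs_theory hR w.2).exists_knowSet_compl_subset_how_imp_know C' δ
    exact ⟨⟨(C'ᶜ, Z) :: w.1, w.2, hZ, hsub⟩, ⟨Z, rfl⟩, hδ⟩
  π p := {w | var p ∈ theory R w.1}

def child {hR : MCS R} (w : (game hR).W) (D : Set Ag) {Z : Set (Formula α Ag)} (hZ : MCS Z)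
    (hsub : knowSet D (theory R w.1) ⊆ Z) : (game hR).W :=
  ⟨(D, Z) :: w.1, w.2, hZ, hsub⟩

theorem simC_child {hR : MCS R} {C D : Set Ag} (hC : C ⊆ D) (w : (game hR).W)
    {Z : Set (Formula α Ag)} (hZ : MCS Z) (hsub : knowSet D (theory R w.1) ⊆ Z) :
    (game hR).simC C w (child w D hZ hsub) :=
  fun _ ha => (base_cons_of_subset (Set.singleton_subset_iff.mpr (hC ha)) _).symm

theorem know_mem_theory_iff_of_simC {hR : MCS R} {C : Set Ag} {w u : (game hR).W}
    (h : (game hR).simC C w u) (χ : Formula α Ag) :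
    know C χ ∈ theory R w.1 ↔ know C χ ∈ theory R u.1 := by
  rw [← know_mem_theory_base_iff hR w.2, ← know_mem_theory_base_iff hR u.2,
    base_eq_of_forall_singleton h]

section TruthLemma

variable {hR : MCS R} {φ : Formula α Ag} (ih : ∀ u, (game hR).Sat u φ ↔ φ ∈ theory R u.1)
include ih

theorem sat_know_iff (C : Set Ag) (w : (game hR).W) :
    (game hR).Sat w (know C φ) ↔ know C φ ∈ theory R w.1 := by
  refine ⟨fun hsat => by_contra fun hK => ?_, fun hK u hwu => ?_⟩
  · obtain ⟨Z, hZ, hsub, hφZ⟩ := (mcs_theory hR w.2).exists_knowSet_subset_not_mem hK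
    exact hφZ ((ih _).mp (hsat _ (simC_child subset_rfl w hZ hsub)))
  · exact (ih u).mpr ((mcs_theory hR u.2).mem_of_prov_imp (.truth C φ)
      ((know_mem_theory_iff_of_simC hwu φ).mp hK))

theorem sat_how_iff (C : Set Ag) (w : (game hR).W) :
    (game hR).Sat w (how C φ) ↔ how C φ ∈ theory R w.1 := by
  have hX := mcs_theory hR w.2
  constructor
  · rintro ⟨C', hC, hC', δ, hforce⟩
    by_contra hH
    obtain ⟨Y, Z, hY, hXY, hZ, hYZ, hM, hφZ⟩ := hX.exists_chain_of_how_not_mem hH hC hC' δ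
    let w' := child w C hY hXY
    let u := child w' C'ᶜ hZ hYZ
    have hsat : (game hR).Sat u (know C φ) := fun u' hu' =>
      hforce w' u u' (simC_child subset_rfl w hY hXY) ⟨⟨Z, rfl⟩, hM⟩ hu'
    exact hφZ ((sat_know_iff ih C u).mp hsat)
  · intro hH
    have hC : C.Nonempty := Set.nonempty_iff_ne_empty.mpr fun hC =>
      hX.neg_mem_iff.mp (hX.mem_of_prov (hC ▸ .emptyCoal φ)) hH
    refine ⟨C, subset_rfl, hC, φ, fun w' u u' hww' hM huu' => ?_⟩
    have hH' : how C φ ∈ theory R w'.1 :=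
      (mcs_theory hR w'.2).mem_of_prov_imp (.truth C _)
        ((know_mem_theory_iff_of_simC hww' _).mp (hX.mem_of_prov_imp (.stratIntro C φ) hH))
    exact (sat_know_iff ih C u).mpr (hM.2 hH') u' huu'

end TruthLemma

theorem sat_iff_mem (hR : MCS R) (φ : Formula α Ag) (w : (game hR).W) :
    (game hR).Sat w φ ↔ φ ∈ theory R w.1 := by
  induction φ generalizing w with
  | var p => rfl
  | bot => exact iff_of_false id (mcs_theory hR w.2).bot_not_mem
  | neg φ ih => exact (not_congr (ih w)).trans (mcs_theory hR w.2).neg_mem_iff.symm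
  | imp φ ψ ihφ ihψ =>
    exact (imp_congr (ihφ w) (ihψ w)).trans (mcs_theory hR w.2).imp_mem_iff.symm
  | know C φ ih => exact sat_know_iff ih C w
  | how C φ ih => exact sat_how_iff ih C w

end Canonical

/-- Strong completeness: if `X ⊬ φ`, then some state of some clandestine game
satisfies all of `X` but not `φ`. -/
theorem strong_completeness {α Ag : Type} {X : Set (Formula α Ag)}
    {φ : Formula α Ag} (h : ¬ ProvFrom X φ) :
    ∃ (G : Game α Ag) (w : G.W),
      (∀ χ ∈ X, G.Sat w χ) ∧ ¬ G.Sat w φ := by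
  obtain ⟨R, hXR, hR⟩ := (consistent_insert_neg h).exists_mcs_superset
  let root : (Canonical.game hR).W := ⟨[], trivial⟩
  refine ⟨Canonical.game hR, root, fun χ hχ => ?_, fun hφ => ?_⟩
  · exact (Canonical.sat_iff_mem hR χ root).mpr (hXR (Set.mem_insert_of_mem _ hχ))
  · exact hR.neg_mem_iff.mp (hXR (Set.mem_insert _ _)) ((Canonical.sat_iff_mem hR φ root).mp hφ)
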